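/- arXiv:1506.05505 — 4 statements merged into one kernel-verified Lean document; each statement's English description precedes it below -/
import Mathlib

section
/- For every k ≥ 4, the maximum coordinate appearing in the recursively defined point set P^k is max(2^k - 1, 2^{k(k-1)/2 - 1}) = 2^{k(k-1)/2 - 1}; equivalently, with n = 2^k, the drawing P^k has size (1/2)·n^{(1/2)·log₂(n/2)}. -/
/-- `f 1 = 0` and `f i = 2 ^ (i*(i-1)/2 - 1)` for `i ≥ 2`. -/
def f (i : ℕ) : ℤ := if i ≤ 1 then 0 else 2 ^ (i * (i - 1) / 2 - 1)

/-- `g 1 = 0` and `g i = f i - f (i-1)` for `i ≥ 2`. -/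
def g (i : ℕ) : ℤ := if i ≤ 1 then 0 else f i - f (i - 1)

/-- The recursively defined drawing of the Horton set:
`P 0 = {(0,0)}` and `P i = {(2x,y) : (x,y) ∈ P (i-1)} ∪ {(2x+1, y + g i) : (x,y) ∈ P (i-1)}`. -/
def P : ℕ → Finset (ℤ × ℤ)
  | 0 => {(0, 0)}
  | i + 1 =>
      ((P i).image fun p => (2 * p.1, p.2)) ∪
        ((P i).image fun p => (2 * p.1 + 1, p.2 + g (i + 1)))

/-- Orientation determinant of the triple `(p, q, r)`. -/
def det3 (p q r : ℤ × ℤ) : ℤ :=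
  (q.1 - p.1) * (r.2 - p.2) - (q.2 - p.2) * (r.1 - p.1)

lemma f_mono (i : ℕ) : f i ≤ f (i + 1) := by
  unfold f
  by_cases h : i + 1 ≤ 1
  · have : i = 0 := by omega
    subst this; simp
  · rw [if_neg h]
    by_cases h2 : i ≤ 1
    · rw [if_pos h2]; positivity
    · rw [if_neg h2]
      apply pow_le_pow_right₀ (by norm_num)
      have : i * (i - 1) ≤ (i + 1) * (i + 1 - 1) := by
        simp only [Nat.add_sub_cancel]
        calc i * (i - 1) ≤ i * i := Nat.mul_le_mul_left _ (Nat.sub_le _ _)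
          _ ≤ (i + 1) * i := Nat.mul_le_mul_right _ (Nat.le_succ _)
      exact Nat.sub_le_sub_right (Nat.div_le_div_right this) 1

lemma g_nonneg (i : ℕ) : 0 ≤ g i := by
  unfold g
  by_cases h : i ≤ 1
  · simp [h]
  · rw [if_neg h]
    obtain ⟨j, rfl⟩ : ∃ j, i = j + 1 := ⟨i - 1, by omega⟩
    simpa using f_mono j

lemma g_telescope (i : ℕ) : g (i + 1) = f (i + 1) - f i := by
  unfold g
  by_cases h : i + 1 ≤ 1
  · have : i = 0 := by omega
    subst this; simp [f]
  · rw [if_neg h]; norm_num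

lemma P_bounds : ∀ k, ∀ p ∈ P k, 0 ≤ p.1 ∧ p.1 ≤ 2 ^ k - 1 ∧ 0 ≤ p.2 ∧ p.2 ≤ f k := by
  intro k
  induction k with
  | zero =>
    intro p hp
    simp only [P, Finset.mem_singleton] at hp
    subst hp; simp [f]
  | succ i ih =>
    intro p hp
    simp only [P, Finset.mem_union, Finset.mem_image] at hp
    rcases hp with ⟨q, hq, rfl⟩ | ⟨q, hq, rfl⟩
    · dsimp only
      obtain ⟨h1, h2, h3, h4⟩ := ih q hq
      have := f_mono i
      refine ⟨by linarith, ?_, h3, by linarith⟩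
      have : (2:ℤ)^(i+1) = 2 * 2^i := by ring
      simp only [this]; linarith
    · dsimp only
      obtain ⟨h1, h2, h3, h4⟩ := ih q hq
      have hg := g_nonneg (i + 1)
      have ht := g_telescope i
      refine ⟨by linarith, ?_, by linarith, by linarith⟩
      have : (2:ℤ)^(i+1) = 2 * 2^i := by ring
      simp only [this]; linarith

lemma corner_mem : ∀ k, ((2:ℤ) ^ k - 1, f k) ∈ P k := by
  intro k
  induction k with
  | zero => simp [P, f]
  | succ i ih =>
    simp only [P, Finset.mem_union, Finset.mem_image]
    right
    refine ⟨_, ih, ?_⟩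
    rw [g_telescope i]
    simp only [Prod.mk.injEq]
    constructor <;> ring

theorem size_of_P :
    ∀ k : ℕ, 4 ≤ k →
      max ((2 : ℤ) ^ k - 1) (2 ^ (k * (k - 1) / 2 - 1)) = (2 : ℤ) ^ (k * (k - 1) / 2 - 1) ∧
      (∀ p ∈ P k, max |p.1| |p.2| ≤ 2 ^ (k * (k - 1) / 2 - 1)) ∧
      (∃ p ∈ P k, max |p.1| |p.2| = 2 ^ (k * (k - 1) / 2 - 1)) := by
  intro k hk
  have hfk : f k = 2 ^ (k * (k - 1) / 2 - 1) := by
    unfold f; rw [if_neg (by omega)]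
  have hexp : k ≤ k * (k - 1) / 2 - 1 := by
    have h1 : 2 * (k + 1) ≤ k * (k - 1) := by nlinarith [Nat.sub_add_cancel (by omega : 1 ≤ k)]
    have h2 : k + 1 ≤ k * (k - 1) / 2 := Nat.le_div_iff_mul_le (by norm_num) |>.2 (by omega)
    omega
  have hle : (2:ℤ) ^ k - 1 ≤ 2 ^ (k * (k - 1) / 2 - 1) := by
    have : (2:ℤ) ^ k ≤ 2 ^ (k * (k - 1) / 2 - 1) := pow_le_pow_right₀ (by norm_num) hexp
    linarith
  refine ⟨max_eq_right hle, ?_, ?_⟩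
  · intro p hp
    obtain ⟨h1, h2, h3, h4⟩ := P_bounds k p hp
    rw [abs_of_nonneg h1, abs_of_nonneg h3]
    exact max_le (le_trans h2 hle) (hfk ▸ h4)
  · refine ⟨((2:ℤ) ^ k - 1, f k), corner_mem k, ?_⟩
    have h0 : (1:ℤ) ≤ 2 ^ k := one_le_pow₀ (by norm_num)
    have h1 : (0:ℤ) ≤ 2 ^ k - 1 := by linarith
    have h2 : (0:ℤ) ≤ f k := by rw [hfk]; positivity
    rw [abs_of_nonneg h1, abs_of_nonneg h2, hfk]
    exact max_eq_right hle
end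

section
/- If four points with integer coordinates are contained in a trapezoid bounded by two vertical lines at horizontal distance D and two non-vertical lines whose vertical separations at the two vertical lines are w₁ and w₄ respectively, and the four points are in general position (no three collinear), then max(w₁, w₄) ≥ 1/D. -/
lemma det_bound (L R M xa ya xb yb xc yc : ℝ) (hM : 0 ≤ M)
    (hxa : L ≤ xa) (hxa' : xa ≤ R) (hxb : L ≤ xb) (hxb' : xb ≤ R)
    (hxc : L ≤ xc) (hxc' : xc ≤ R)
    (hya : 0 ≤ ya) (hya' : ya ≤ M) (hyb : 0 ≤ yb) (hyb' : yb ≤ M)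
    (hyc : 0 ≤ yc) (hyc' : yc ≤ M) :
    |(xb - xa) * (yc - ya) - (yb - ya) * (xc - xa)| ≤ (R - L) * M := by
  rw [abs_le]
  constructor <;>
  · rcases le_total xa xb with h1 | h1 <;> rcases le_total xb xc with h2 | h2 <;>
      rcases le_total xa xc with h3 | h3 <;> nlinarith



/-- Four lattice points in general position inside a trapezoid bounded by two
vertical lines at horizontal distance `D` and two non-vertical lines, whose
vertical separations at the two vertical lines are `w1` and `w4`, force
`max w1 w4 ≥ 1 / D`. -/
theorem width_lower_bound (D w1 w4 x0 m1 c1 m2 c2 : ℝ) (hD : 0 < D)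
    (hle : ∀ x : ℝ, x0 ≤ x → x ≤ x0 + D → m1 * x + c1 ≤ m2 * x + c2)
    (hw1 : w1 = (m2 * x0 + c2) - (m1 * x0 + c1))
    (hw4 : w4 = (m2 * (x0 + D) + c2) - (m1 * (x0 + D) + c1))
    (p : Fin 4 → ℤ × ℤ)
    (hin : ∀ i, x0 ≤ ((p i).1 : ℝ) ∧ ((p i).1 : ℝ) ≤ x0 + D ∧
      m1 * ((p i).1 : ℝ) + c1 ≤ ((p i).2 : ℝ) ∧
      ((p i).2 : ℝ) ≤ m2 * ((p i).1 : ℝ) + c2)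
    (hgp : ∀ i j u : Fin 4, i ≠ j → i ≠ u → j ≠ u →
      ((p j).1 - (p i).1) * ((p u).2 - (p i).2) ≠
        ((p j).2 - (p i).2) * ((p u).1 - (p i).1)) :
    1 / D ≤ max w1 w4 := by
  set M := max w1 w4 with hM
  -- w1 ≥ 0, hence M ≥ 0
  have hw1nn : 0 ≤ w1 := by have := hle x0 le_rfl (by linarith); linarith [hw1]
  have hMnn : 0 ≤ M := le_trans hw1nn (le_max_left _ _)
  -- sheared vertical coordinate v i
  set v : Fin 4 → ℝ := fun i => ((p i).2 : ℝ) - m1 * ((p i).1 : ℝ) - c1 with hv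
  have hvlb : ∀ i, 0 ≤ v i := by
    intro i; obtain ⟨_, _, h3, _⟩ := hin i; simp only [hv]; linarith
  have hvub : ∀ i, v i ≤ M := by
    intro i
    obtain ⟨h1, h2, h3, h4⟩ := hin i
    have key : ((m2 - m1) * ((p i).1 : ℝ) + (c2 - c1)) * D ≤ M * D := by
      have e : ((m2 - m1) * ((p i).1 : ℝ) + (c2 - c1)) * D
          = w1 * (x0 + D - ((p i).1 : ℝ)) + w4 * (((p i).1 : ℝ) - x0) := by
        rw [hw1, hw4]; ring
      have hm1 : w1 ≤ M := le_max_left _ _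
      have hm4 : w4 ≤ M := le_max_right _ _
      nlinarith
    have : (m2 - m1) * ((p i).1 : ℝ) + (c2 - c1) ≤ M :=
      le_of_mul_le_mul_right key hD
    simp only [hv]; linarith
  -- integer determinant of points 0,1,2 is nonzero
  have hdz : ((p 1).1 - (p 0).1) * ((p 2).2 - (p 0).2) -
      ((p 1).2 - (p 0).2) * ((p 2).1 - (p 0).1) ≠ 0 := by
    have := hgp 0 1 2 (by decide) (by decide) (by decide)
    intro h; exact this (by linarith [h])
  have habs : (1 : ℤ) ≤ |((p 1).1 - (p 0).1) * ((p 2).2 - (p 0).2) -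
      ((p 1).2 - (p 0).2) * ((p 2).1 - (p 0).1)| := Int.one_le_abs hdz
  -- real version
  have habsR : (1 : ℝ) ≤ |(((p 1).1 : ℝ) - ((p 0).1 : ℝ)) * (((p 2).2 : ℝ) - ((p 0).2 : ℝ)) -
      (((p 1).2 : ℝ) - ((p 0).2 : ℝ)) * (((p 2).1 : ℝ) - ((p 0).1 : ℝ))| := by
    have := habs
    have : ((1 : ℤ) : ℝ) ≤ (|((p 1).1 - (p 0).1) * ((p 2).2 - (p 0).2) -
      ((p 1).2 - (p 0).2) * ((p 2).1 - (p 0).1)| : ℤ) := by exact_mod_cast this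
    push_cast at this
    convert this using 2
  -- determinant equals sheared determinant
  have hshear : (((p 1).1 : ℝ) - ((p 0).1 : ℝ)) * (((p 2).2 : ℝ) - ((p 0).2 : ℝ)) -
      (((p 1).2 : ℝ) - ((p 0).2 : ℝ)) * (((p 2).1 : ℝ) - ((p 0).1 : ℝ))
      = (((p 1).1 : ℝ) - ((p 0).1 : ℝ)) * (v 2 - v 0) -
        (v 1 - v 0) * (((p 2).1 : ℝ) - ((p 0).1 : ℝ)) := by
    simp only [hv]; ring
  obtain ⟨ha1, ha2, _, _⟩ := hin 0
  obtain ⟨hb1, hb2, _, _⟩ := hin 1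
  obtain ⟨hc1, hc2, _, _⟩ := hin 2
  have hdb := det_bound x0 (x0 + D) M ((p 0).1 : ℝ) (v 0) ((p 1).1 : ℝ) (v 1)
    ((p 2).1 : ℝ) (v 2) hMnn ha1 ha2 hb1 hb2 hc1 hc2
    (hvlb 0) (hvub 0) (hvlb 1) (hvub 1) (hvlb 2) (hvub 2)
  rw [← hshear] at hdb
  have : (1 : ℝ) ≤ D * M := by
    calc (1:ℝ) ≤ _ := habsR
    _ ≤ (x0 + D - x0) * M := hdb
    _ = D * M := by ring
  rw [div_le_iff₀ hD]
  linarith [this]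
end

section
/- Let P ⊆ ℝ² be a finite set of even size 2m whose points are sorted by distinct x-coordinates, let P_even and P_odd be the even- and odd-indexed points, and suppose every point of P_odd lies strictly above every line through two points of P_even and every point of P_even lies strictly below every line through two points of P_odd. If ℓ₁ is the line through two points of P_even whose rightmost defining point has x-coordinate ≥ s, and ℓ₂ is the line through two points of P_odd whose leftmost defining point has x-coordinate ≤ s, then at x = s the line ℓ₂ is strictly above ℓ₁. -/
/-- The `y`-value at abscissa `x` of the (non-vertical) line through `a` and `b`. -/
noncomputable def lineY (a b : ℝ × ℝ) (x : ℝ) : ℝ :=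
  a.2 + (b.2 - a.2) * (x - a.1) / (b.1 - a.1)

lemma lineY_sub (a b : ℝ × ℝ) (x y : ℝ) :
    lineY a b x - lineY a b y = (b.2 - a.2) / (b.1 - a.1) * (x - y) := by
  unfold lineY; ring

lemma lineY_left (a b : ℝ × ℝ) : lineY a b a.1 = a.2 := by
  simp [lineY]

lemma lineY_right (a b : ℝ × ℝ) (h : a.1 ≠ b.1) : lineY a b b.1 = b.2 := by
  unfold lineY
  rw [mul_div_assoc, div_self (sub_ne_zero.2 (Ne.symm h))]
  ring


lemma affine_between_pos (A B K xu xj s : ℝ) (hA : 0 < A) (hB : 0 < B)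
    (hBeq : B = A + K * (xj - xu)) (h1 : xu ≤ s) (h2 : s ≤ xj) :
    0 < A + K * (s - xu) := by
  rcases eq_or_lt_of_le (h1.trans h2) with h | h
  · have hs : s = xu := le_antisymm (h ▸ h2) h1
    simpa [hs] using hA
  · have hid : (xj - xu) * (A + K * (s - xu)) = (xj - s) * A + (s - xu) * B := by
      rw [hBeq]; ring
    have hrhs : 0 < (xj - s) * A + (s - xu) * B := by
      rcases eq_or_lt_of_le h1 with h' | h'
      · have : 0 < (xj - s) * A := mul_pos (by rw [← h']; linarith) hA
        nlinarith [mul_nonneg (sub_nonneg.2 h1) hB.le]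
      · have : 0 < (s - xu) * B := mul_pos (by linarith) hB
        nlinarith [mul_nonneg (sub_nonneg.2 h2) hA.le]
    nlinarith [hid, hrhs]

/-- If the odd-indexed points of `p` are high above the even-indexed points, then any
line through two odd points is strictly above any line through two even points at
every abscissa `s` lying between the leftmost defining point of the odd line and the
rightmost defining point of the even line. -/
theorem odd_line_above_even_line (m : ℕ) (p : Fin (2 * m) → ℝ × ℝ)
    (hmono : StrictMono fun i => (p i).1)
    (habove : ∀ i j u : Fin (2 * m), Even (i : ℕ) → Even (j : ℕ) → i < j →
      Odd (u : ℕ) → lineY (p i) (p j) ((p u).1) < (p u).2)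
    (hbelow : ∀ i j u : Fin (2 * m), Odd (i : ℕ) → Odd (j : ℕ) → i < j →
      Even (u : ℕ) → (p u).2 < lineY (p i) (p j) ((p u).1))
    (s : ℝ) (i j u v : Fin (2 * m))
    (hi : Even (i : ℕ)) (hj : Even (j : ℕ)) (hij : i < j)
    (hu : Odd (u : ℕ)) (hv : Odd (v : ℕ)) (huv : u < v)
    (hjs : s ≤ (p j).1) (hus : (p u).1 ≤ s) :
    lineY (p i) (p j) s < lineY (p u) (p v) s := by
  set xu := (p u).1 with hxu
  set xj := (p j).1 with hxj
  -- even line below odd line at xu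
  have h1 : lineY (p i) (p j) xu < lineY (p u) (p v) xu := by
    have := habove i j u hi hj hij hu
    rwa [← lineY_left (p u) (p v)] at this
  -- even line below odd line at xj
  have h2 : lineY (p i) (p j) xj < lineY (p u) (p v) xj := by
    have := hbelow u v j hu hv huv hj
    rwa [← lineY_right (p i) (p j) (ne_of_lt (hmono hij))] at this
  set k1 := ((p j).2 - (p i).2) / ((p j).1 - (p i).1) with hk1
  set k2 := ((p v).2 - (p u).2) / ((p v).1 - (p u).1) with hk2
  have e1 : lineY (p i) (p j) s - lineY (p i) (p j) xu = k1 * (s - xu) :=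
    lineY_sub _ _ _ _
  have e2 : lineY (p u) (p v) s - lineY (p u) (p v) xu = k2 * (s - xu) :=
    lineY_sub _ _ _ _
  have e3 : lineY (p i) (p j) xj - lineY (p i) (p j) xu = k1 * (xj - xu) :=
    lineY_sub _ _ _ _
  have e4 : lineY (p u) (p v) xj - lineY (p u) (p v) xu = k2 * (xj - xu) :=
    lineY_sub _ _ _ _
  have key := affine_between_pos (lineY (p u) (p v) xu - lineY (p i) (p j) xu)
    (lineY (p u) (p v) xj - lineY (p i) (p j) xj) (k2 - k1) xu xj s
    (sub_pos.2 h1) (sub_pos.2 h2) (by linarith) hus hjs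
  linarith
end

section
/- Let Q be a vertex at the (t+1)-th level of the tree T associated to a set P of 2^k points sorted by distinct x-coordinates, and let ℓ₁, ℓ₂ be vertical lines inside the slab R (between p_{n/4} and p_{3n/4−1}) with exactly 2^{k−t} points of P strictly between them. Then exactly two points of Q lie between ℓ₁ and ℓ₂. -/
/-- Any block of `2*m` consecutive naturals contains exactly two elements of a
residue class `r < m`. -/
lemma count_mod_Ico (m r : ℕ) (hr : r < m) (a : ℕ) :
    ((Finset.Ico a (a + 2 * m)).filter (fun j => j % m = r)).card = 2 := by
  induction a with
  | zero =>
    have hset : (Finset.Ico 0 (0 + 2 * m)).filter (fun j => j % m = r) = {r, m + r} := by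
      ext x
      simp only [Finset.mem_filter, Finset.mem_Ico, Finset.mem_insert, Finset.mem_singleton]
      constructor
      · rintro ⟨⟨-, hx2⟩, hmod⟩
        rcases Nat.lt_or_ge x m with hcase | hcase
        · left
          rw [Nat.mod_eq_of_lt hcase] at hmod
          omega
        · right
          have hxm : x - m < m := by omega
          have hxmod : x % m = x - m := by
            rw [Nat.mod_eq_sub_mod hcase, Nat.mod_eq_of_lt hxm]
          omega
      · rintro (rfl | rfl)
        · exact ⟨⟨Nat.zero_le _, by omega⟩, Nat.mod_eq_of_lt hr⟩
        · exact ⟨⟨Nat.zero_le _, by omega⟩, by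
            rw [Nat.add_mod_left]; exact Nat.mod_eq_of_lt hr⟩
    rw [hset, Finset.card_insert_of_notMem (by simp; omega), Finset.card_singleton]
  | succ n ih =>
    have e1 : Finset.Ico (n + 1) (n + 1 + 2 * m)
        = insert (n + 2 * m) (Finset.Ico (n + 1) (n + 2 * m)) := by
      ext x; simp only [Finset.mem_Ico, Finset.mem_insert]; omega
    have e2 : Finset.Ico n (n + 2 * m) = insert n (Finset.Ico (n + 1) (n + 2 * m)) := by
      ext x
      simp only [Finset.mem_Ico, Finset.mem_insert]
      omega
    have hmod : (n + 2 * m) % m = n % m := by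
      simp [Nat.add_mul_mod_self_right]
    rw [e1, Finset.filter_insert]
    rw [e2, Finset.filter_insert] at ih
    by_cases h : n % m = r
    · rw [if_pos (by rw [hmod]; exact h)]
      rw [if_pos h] at ih
      rw [Finset.card_insert_of_notMem (by simp)]
      rw [Finset.card_insert_of_notMem (by simp)] at ih
      omega
    · rw [if_neg (by rw [hmod]; exact h)]
      rw [if_neg h] at ih
      exact ih

/-- Let `Q` be a vertex at the `(t+1)`-th level of the tree `T` (identified with the
residue class `r` modulo `2^(k-t-1)` of indices), and let `x1 < x2` be vertical lines
inside the slab `R` (between `p (n/4)` and `p (3n/4 - 1)`, `n = 2^k`) with exactly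
`2^(k-t)` points of `P` strictly between them. Then exactly two points of `Q` lie
between them. -/
theorem two_points_of_Q_between (k t r : ℕ) (ht : 2 ≤ t) (htk : t + 1 ≤ k)
    (hr : r < 2 ^ (k - t - 1))
    (p : Fin (2 ^ k) → ℝ × ℝ)
    (hmono : StrictMono fun i => (p i).1)
    (x1 x2 : ℝ) (hx12 : x1 < x2)
    (hx1 : (p ⟨2 ^ k / 4, Nat.div_lt_self (Nat.two_pow_pos k) (by norm_num)⟩).1 < x1)
    (hx2 : x2 < (p ⟨3 * 2 ^ k / 4 - 1, by have h := Nat.two_pow_pos k; omega⟩).1)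
    (hcount : (Finset.univ.filter fun u : Fin (2 ^ k) =>
        x1 < (p u).1 ∧ (p u).1 < x2).card = 2 ^ (k - t)) :
    (Finset.univ.filter fun u : Fin (2 ^ k) =>
        (u : ℕ) % 2 ^ (k - t - 1) = r ∧ x1 < (p u).1 ∧ (p u).1 < x2).card = 2 := by
  set M := 2 ^ (k - t - 1) with hMdef
  have hM : 0 < M := Nat.two_pow_pos _
  have hN : 2 ^ (k - t) = 2 * M := by
    rw [hMdef, ← pow_succ']
    congr 1
    omega
  set S := Finset.univ.filter (fun u : Fin (2 ^ k) => x1 < (p u).1 ∧ (p u).1 < x2) with hSdef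
  have hne : S.Nonempty := Finset.card_pos.mp (by rw [hcount]; positivity)
  set a := S.min' hne with hadef
  set b := S.max' hne with hbdef
  have ha : a ∈ S := S.min'_mem hne
  have hb : b ∈ S := S.max'_mem hne
  have hpa := (Finset.mem_filter.mp ha).2
  have hpb := (Finset.mem_filter.mp hb).2
  have hSeq : S = Finset.Icc a b := by
    apply Finset.Subset.antisymm
    · intro u hu
      exact Finset.mem_Icc.mpr ⟨S.min'_le u hu, S.le_max' u hu⟩
    · intro u hu
      rw [Finset.mem_Icc] at hu
      refine Finset.mem_filter.mpr ⟨Finset.mem_univ _, ?_, ?_⟩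
      · exact lt_of_lt_of_le hpa.1 (hmono.monotone hu.1)
      · exact lt_of_le_of_lt (hmono.monotone hu.2) hpb.2
  have hab : (a : ℕ) ≤ (b : ℕ) := S.min'_le b hb
  have hcard2 : (b : ℕ) + 1 - (a : ℕ) = 2 ^ (k - t) := by
    rw [hSeq, Fin.card_Icc] at hcount
    exact hcount
  have hb' : (b : ℕ) = (a : ℕ) + 2 * M - 1 := by omega
  have hfilt : (Finset.univ.filter fun u : Fin (2 ^ k) =>
      (u : ℕ) % M = r ∧ x1 < (p u).1 ∧ (p u).1 < x2)
      = S.filter (fun u : Fin (2 ^ k) => (u : ℕ) % M = r) := by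
    ext u
    simp only [hSdef, Finset.mem_filter, Finset.mem_univ, true_and]
    tauto
  rw [hfilt, hSeq]
  have hmap : ((Finset.Icc a b).filter (fun u : Fin (2 ^ k) => (u : ℕ) % M = r)).card
      = ((Finset.Icc (a : ℕ) (b : ℕ)).filter (fun j => j % M = r)).card := by
    rw [← Fin.map_valEmbedding_Icc, Finset.filter_map, Finset.card_map]
    rfl
  rw [hmap]
  have hIcc : Finset.Icc (a : ℕ) (b : ℕ) = Finset.Ico (a : ℕ) ((a : ℕ) + 2 * M) := by
    ext x
    simp only [Finset.mem_Icc, Finset.mem_Ico]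
    omega
  rw [hIcc]
  exact count_mod_Ico M r hr (a : ℕ)
end
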